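/- Every RK graph contains a Hamiltonian path, i.e., a path that visits every vertex of the graph exactly once. -/

import Mathlib

/-!
Take a longest path `x₀ … xₘ` from `u` to `v` and suppose it misses a vertex. By maximality every
neighbour of `u` or `v` lies on the path, and by connectivity some vertex off the path is adjacent
to it. Hence no index `i` has both `u ~ xᵢ₊₁` and `v ~ xᵢ`: such a crossing closes the path into a
cycle through all its vertices (Pósa rotation), and the outside vertex would extend that cycle to a
longer path. So the indices `i < m` with `u ~ xᵢ₊₁` and those with `v ~ xᵢ` are disjoint, and both
are disjoint from the `δ(u, v) - 2` indices at which `dist(v, xᵢ)` steps down from a level in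
`[2, δ(u, v) - 1]`. This gives `d(u) + d(v) + δ(u, v) ≤ m + 2 ≤ n`, contradicting the RK condition
for the nonadjacent pair `u, v`.
-/

/-- An RK (Rahman–Kaykobad) graph: a connected finite simple graph on `n` vertices such that
for every pair of distinct nonadjacent vertices `u, v` it holds that
`d(u) + d(v) + δ(u, v) ≥ n + 1`. -/
def IsRKGraph {V : Type*} [Fintype V] (G : SimpleGraph V) [DecidableRel G.Adj] : Prop :=
  G.Connected ∧ ∀ u v : V, u ≠ v → ¬ G.Adj u v →
    Fintype.card V + 1 ≤ G.degree u + G.degree v + G.dist u v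

open Finset

theorem exists_downcrossing (f : ℕ → ℕ) {t : ℕ} :
    ∀ {m : ℕ}, t ≤ f 0 → f m < t → ∃ i < m, t ≤ f i ∧ f (i + 1) < t
  | 0, h0, hm => absurd h0 hm.not_ge
  | m + 1, h0, hm => by
    by_cases hlt : f m < t
    · obtain ⟨i, hi, hti, hlt'⟩ := exists_downcrossing f h0 hlt
      exact ⟨i, by omega, hti, hlt'⟩
    · exact ⟨m, by omega, not_lt.mp hlt, hm⟩

/-- Each level `t ∈ [2, f 0 - 1]` is left downwards at an index `i` with `f i = t`. -/
theorem sub_two_le_card_filter_of_step_le_one (f : ℕ → ℕ) (m : ℕ)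
    (hstep : ∀ i < m, f i ≤ f (i + 1) + 1) (hm : f m = 0) :
    f 0 - 2 ≤ #{i ∈ range m | 2 ≤ f i ∧ f (i + 1) + 2 ≤ f 0} := by
  have hsub : Icc 2 (f 0 - 1) ⊆ {i ∈ range m | 2 ≤ f i ∧ f (i + 1) + 2 ≤ f 0}.image f := by
    intro t ht
    rw [mem_Icc] at ht
    obtain ⟨i, hi, hti, hlt⟩ := exists_downcrossing f (t := t) (m := m) (by omega) (by omega)
    have := hstep i hi
    exact mem_image.mpr ⟨i, mem_filter.mpr ⟨mem_range.mpr hi, by omega, by omega⟩, by omega⟩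
  calc f 0 - 2 = #(Icc 2 (f 0 - 1)) := by rw [Nat.card_Icc]; omega
    _ ≤ _ := card_le_card hsub
    _ ≤ _ := card_image_le

namespace List

variable {α : Type*} {R : α → α → Prop}

theorem cycleChain_reverse_append [Std.Symm R] {s t : List α} (hs : s ≠ []) (ht : t ≠ [])
    (hch : (s ++ t).IsChain R) (hhead : R (s.head hs) (t.head ht))
    (hlast : R (s.getLast hs) (t.getLast ht)) :
    Cycle.Chain R (s.reverse ++ t : List α) := by
  rw [Cycle.chain_ne_nil _ (by simp [ht]), getLast_append_of_ne_nil _ ht, ← cons_append,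
    isChain_append]
  obtain ⟨hs', ht', -⟩ := isChain_append.mp hch
  refine ⟨?_, ht', fun x hx y hy => ?_⟩
  · rw [← reverse_concat', isChain_reverse, isChain_append]
    refine ⟨hs'.imp fun a b h => symm h, isChain_singleton _, fun x hx y hy => ?_⟩
    simp only [getLast?_eq_some_getLast hs, Option.mem_def, Option.some.injEq, head?_cons] at hx hy
    exact hx ▸ hy ▸ symm hlast
  · simp only [getLast?_cons, getLast?_reverse, head?_eq_some_head hs, head?_eq_some_head ht,
      Option.getD_some, Option.mem_def, Option.some.injEq] at hx hy
    exact hx ▸ hy ▸ hhead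

theorem exists_longer_isChain_of_cycleChain {c : List α} (hcyc : Cycle.Chain R (c : Cycle α))
    (hnd : c.Nodup) {a w : α} (ha : a ∈ c) (hw : w ∉ c) (hwa : R w a) :
    ∃ l : List α, l.IsChain R ∧ l.Nodup ∧ l.length = c.length + 1 := by
  obtain ⟨l₁, l₂, rfl⟩ := append_of_mem ha
  have hrot : l₁ ++ a :: l₂ ~r a :: (l₂ ++ l₁) := by
    simpa using isRotated_append (l := l₁) (l' := a :: l₂)
  rw [Cycle.coe_eq_coe.mpr hrot, Cycle.chain_coe_cons] at hcyc
  refine ⟨w :: a :: (l₂ ++ l₁), isChain_cons_cons.mpr ⟨hwa, hcyc.prefix ⟨[a], by simp⟩⟩, ?_, ?_⟩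
  · exact nodup_cons.mpr ⟨hrot.perm.mem_iff.not.mp hw, hrot.perm.nodup_iff.mp hnd⟩
  · simp only [length_cons, length_append]
    omega

end List

namespace SimpleGraph

variable {V : Type*} {G : SimpleGraph V}

theorem degree_le_card_filter_adj [DecidableRel G.Adj] {w : V} [Fintype (G.neighborSet w)]
    (f : ℕ → V) (m : ℕ) (h : ∀ x, G.Adj w x → ∃ i < m, f i = x) :
    G.degree w ≤ #{i ∈ range m | G.Adj w (f i)} := by
  classical
  rw [← card_neighborFinset_eq_degree]
  calc #(G.neighborFinset w) ≤ #({i ∈ range m | G.Adj w (f i)}.image f) := by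
        refine card_le_card fun x hx => ?_
        rw [mem_neighborFinset] at hx
        obtain ⟨i, hi, rfl⟩ := h x hx
        exact mem_image_of_mem f (mem_filter.mpr ⟨mem_range.mpr hi, hx⟩)
    _ ≤ _ := card_image_le

namespace Walk

variable {u v : V}

def IsLongestPath (p : G.Walk u v) : Prop :=
  p.IsPath ∧ ∀ ⦃a b : V⦄ (q : G.Walk a b), q.IsPath → q.length ≤ p.length

theorem degree_add_degree_add_dist_le [DecidableRel G.Adj] [Fintype (G.neighborSet u)]
    [Fintype (G.neighborSet v)] (p : G.Walk u v)
    (hu : ∀ w, G.Adj u w → w ∈ p.support) (hv : ∀ w, G.Adj v w → w ∈ p.support)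
    (hcross : ∀ i < p.length, ¬(G.Adj u (p.getVert (i + 1)) ∧ G.Adj v (p.getVert i))) :
    G.degree u + G.degree v + G.dist u v ≤ p.length + 2 := by
  set m := p.length
  set d : ℕ → ℕ := fun i => G.dist v (p.getVert i) with hd
  have hd0 : d 0 = G.dist u v := by simp [hd, dist_comm]
  set A := {i ∈ range m | G.Adj u (p.getVert (i + 1))}
  set B := {i ∈ range m | G.Adj v (p.getVert i)}
  set E := {i ∈ range m | 2 ≤ d i ∧ d (i + 1) + 2 ≤ d 0}
  have hA : G.degree u ≤ #A := by
    refine degree_le_card_filter_adj _ m fun w hw => ?_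
    obtain ⟨j, rfl, hj⟩ := mem_support_iff_exists_getVert.mp (hu w hw)
    obtain _ | j := j
    · exact absurd hw (by simp)
    · exact ⟨j, by omega, rfl⟩
  have hB : G.degree v ≤ #B := by
    refine degree_le_card_filter_adj _ m fun w hw => ?_
    obtain ⟨j, rfl, hj⟩ := mem_support_iff_exists_getVert.mp (hv w hw)
    refine ⟨j, lt_of_le_of_ne hj fun hjm => ?_, rfl⟩
    exact absurd hw (by simp [hjm, m])
  have hE : d 0 - 2 ≤ #E := by
    refine sub_two_le_card_filter_of_step_le_one d m (fun i hi => ?_) (by simp [hd, m])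
    rcases (p.adj_getVert_succ hi).diff_dist_adj (u := v) with h | h | h <;> simp only [hd] <;>
      omega
  have hAB : Disjoint A B :=
    disjoint_filter.mpr fun i hi hA hB => hcross i (mem_range.mp hi) ⟨hA, hB⟩
  have hAE : Disjoint A E := disjoint_filter.mpr fun i _ hA hE => by
    have hvu : G.dist v u ≤ G.dist v (p.getVert (i + 1)) + 1 := by
      simpa [dist_eq_one_iff_adj.mpr hA.symm] using hA.symm.reachable.dist_triangle_right v
    simp only [hd, getVert_zero] at hE
    omega
  have hBE : Disjoint B E := disjoint_filter.mpr fun i _ hB hE => by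
    have := dist_eq_one_iff_adj.mpr hB
    simp only [hd] at hE
    omega
  have hcard : #A + #B + #E ≤ m := by
    rw [← card_union_of_disjoint hAB,
      ← card_union_of_disjoint (disjoint_union_left.mpr ⟨hAE, hBE⟩)]
    exact (card_le_card (union_subset (union_subset (filter_subset _ _) (filter_subset _ _))
      (filter_subset _ _))).trans (card_range m).le
  omega

namespace IsLongestPath

variable {p : G.Walk u v}

theorem reverse (hp : p.IsLongestPath) : p.reverse.IsLongestPath :=
  ⟨hp.1.reverse, by simpa using hp.2⟩

theorem mem_support_of_adj_start (hp : p.IsLongestPath) {w : V} (h : G.Adj u w) :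
    w ∈ p.support := by
  by_contra hw
  simpa using hp.2 (cons h.symm p) (hp.1.cons hw)

theorem mem_support_of_adj_end (hp : p.IsLongestPath) {w : V} (h : G.Adj v w) :
    w ∈ p.support := by
  simpa using hp.reverse.mem_support_of_adj_start h

theorem length_le_of_isChain (hp : p.IsLongestPath) {l : List V} (hne : l ≠ [])
    (hch : l.IsChain G.Adj) (hnd : l.Nodup) : l.length ≤ p.length + 1 := by
  have := hp.2 (ofSupport l hne hch) (IsPath.mk' (by simpa using hnd))
  simp only [length_ofSupport] at this
  omega

theorem not_adj_getVert_succ_and_adj_getVert (hp : p.IsLongestPath) {a w : V}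
    (ha : a ∈ p.support) (hw : w ∉ p.support) (haw : G.Adj a w) {i : ℕ} (hi : i < p.length) :
    ¬(G.Adj u (p.getVert (i + 1)) ∧ G.Adj v (p.getVert i)) := by
  rintro ⟨hhead, hlast⟩
  have : Std.Symm G.Adj := ⟨fun _ _ h => h.symm⟩
  set l := p.support
  have hs : l.take (i + 1) ≠ [] := by simp [l]
  have ht : l.drop (i + 1) ≠ [] := by
    simp only [ne_eq, List.drop_eq_nil_iff, length_support, l]
    omega
  have hsh : (l.take (i + 1)).head hs = u := by simp [l, List.head_take]
  have hsl : (l.take (i + 1)).getLast hs = p.getVert i := by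
    rw [List.getLast_take, List.getElem?_eq_getElem (by simp only [length_support, l]; omega)]
    simp [l, support_getElem_eq_getVert]
  have hth : (l.drop (i + 1)).head ht = p.getVert (i + 1) := by
    simp [l, List.head_drop, support_getElem_eq_getVert]
  have htl : (l.drop (i + 1)).getLast ht = v := by simp [l, List.getLast_drop]
  have hcyc := List.cycleChain_reverse_append hs ht (by simpa using p.isChain_adj_support)
    (by rwa [hsh, hth]) (by rw [hsl, htl]; exact hlast.symm)
  have hperm : List.Perm ((l.take (i + 1)).reverse ++ l.drop (i + 1)) l := by
    simpa using (l.take (i + 1)).reverse_perm.append_right (l.drop (i + 1))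
  obtain ⟨l', hch, hnd, hlen⟩ := List.exists_longer_isChain_of_cycleChain hcyc
    (hperm.nodup_iff.mpr hp.1.support_nodup) (hperm.mem_iff.mpr ha) (hperm.mem_iff.not.mpr hw)
    haw.symm
  have := hp.length_le_of_isChain (by rintro rfl; simp at hlen) hch hnd
  simp only [hperm.length_eq, length_support, l] at hlen
  omega

end IsLongestPath

end Walk

variable (G) in
theorem exists_isLongestPath [Finite V] [Nonempty V] :
    ∃ (u v : V) (p : G.Walk u v), p.IsLongestPath := by
  have := Fintype.ofFinite V
  let S : Set ℕ := {n | ∃ (a b : V) (q : G.Walk a b), q.IsPath ∧ q.length = n}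
  have hS : S.Nonempty := ⟨0, Classical.arbitrary V, _, .nil, .nil, rfl⟩
  have hbdd : BddAbove S := ⟨Fintype.card V, by rintro _ ⟨a, b, q, hq, rfl⟩; exact hq.length_lt.le⟩
  obtain ⟨u, v, p, hp, hlen⟩ := Nat.sSup_mem hS hbdd
  exact ⟨u, v, p, hp, fun a b q hq => hlen ▸ le_csSup hbdd ⟨a, b, q, hq, rfl⟩⟩

end SimpleGraph

/-- Every RK graph contains a Hamiltonian path: a path visiting every vertex exactly once. -/
theorem stmt15 {V : Type*} [Fintype V] [DecidableEq V]
    (G : SimpleGraph V) [DecidableRel G.Adj]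
    (hRK : IsRKGraph G) :
    ∃ (u v : V) (p : G.Walk u v), p.IsHamiltonian := by
  obtain ⟨hconn, hRK⟩ := hRK
  have := hconn.nonempty
  obtain ⟨u, v, p, hp⟩ := G.exists_isLongestPath
  refine ⟨u, v, p, hp.1.isHamiltonian_of_mem fun w => ?_⟩
  by_contra hw
  obtain ⟨⟨⟨a, b⟩, hab⟩, -, ha, hb⟩ :=
    (hconn.preconnected u w).some.exists_boundary_dart {x | x ∈ p.support} p.start_mem_support hw
  have hcross i (hi : i < p.length) := hp.not_adj_getVert_succ_and_adj_getVert ha hb hab hi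
  have hdeg := p.degree_add_degree_add_dist_le (fun _ => hp.mem_support_of_adj_start)
    (fun _ => hp.mem_support_of_adj_end) hcross
  have hlen : p.length + 1 < Fintype.card V := by
    simpa [List.toFinset_card_of_nodup hp.1.support_nodup] using
      Finset.card_lt_univ_of_notMem (s := p.support.toFinset) (by simpa using hw)
  have hpos : 0 < p.length := by
    refine Nat.pos_of_ne_zero fun h0 => hb (hp.mem_support_of_adj_start ?_)
    obtain ⟨n, rfl, hn⟩ := SimpleGraph.Walk.mem_support_iff_exists_getVert.mp ha
    simpa [show n = 0 by omega] using hab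
  have huv : u ≠ v := by
    rintro rfl
    exact hpos.ne' (SimpleGraph.Walk.length_eq_zero_iff.mpr
      (SimpleGraph.Walk.isPath_iff_nil.mp hp.1))
  have hnadj : ¬ G.Adj u v := fun h => hcross (p.length - 1) (by omega)
    ⟨by simpa [Nat.sub_add_cancel hpos] using h,
      by simpa [Nat.sub_add_cancel hpos] using
        (p.adj_getVert_succ (i := p.length - 1) (by omega)).symm⟩
  have := hRK u v huv hnadj
  omega
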